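/- arXiv:1012.3882 — 3 statements merged into one kernel-verified Lean document; each statement's English description precedes it below -/
import Mathlib

section
/- For any γ ∈ ℝ and all s, r, m > 0, q̄_s(r,m) · e^{γm − γ²s/2} ≤ (1/s) e^{γ₊ r} (C₁ + C₂ γ₊ √s), where C₁ = √(2/(πe)), C₂ = √(2/π), and γ₊ = max(γ,0). -/
open MeasureTheory Real

/-- The Gaussian density with mean `0` and variance `s`. -/
noncomputable def gaussDensity (s x : ℝ) : ℝ :=
  (Real.sqrt (2 * Real.pi * s))⁻¹ * Real.exp (-x ^ 2 / (2 * s))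

/-- The kernel `q̄_s(r,m) = (g_s(r−m) − g_s(r+m))/r`. -/
noncomputable def qbar (s r m : ℝ) : ℝ :=
  (gaussDensity s (r - m) - gaussDensity s (r + m)) / r

lemma gauss_hasDerivAt (s : ℝ) (hs : 0 < s) (x : ℝ) :
    HasDerivAt (fun y => -gaussDensity s y) (x / s * gaussDensity s x) x := by
  have h1 : HasDerivAt (fun y : ℝ => -y ^ 2 / (2 * s)) (-x / s) x := by
    have := ((hasDerivAt_pow 2 x).neg).div_const (2 * s)
    convert this using 1
    all_goals try rfl
    field_simp
    ring
  have h2 := (h1.exp.const_mul (Real.sqrt (2 * Real.pi * s))⁻¹).neg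
  convert h2 using 1
  all_goals try rfl
  unfold gaussDensity
  field_simp

lemma abs_mul_exp_le (s : ℝ) (hs : 0 < s) (x : ℝ) :
    |x| * Real.exp (-x ^ 2 / (2 * s)) ≤ Real.sqrt s * Real.exp (-(1/2 : ℝ)) := by
  have hss := Real.sq_sqrt hs.le
  have h1 : |x| ≤ Real.sqrt s * Real.exp (x ^ 2 / (2 * s) - 1/2) := by
    have he := Real.add_one_le_exp (x ^ 2 / (2 * s) - 1/2)
    have key : ∀ t u : ℝ, 0 ≤ u → 2 * u ^ 2 * t ≤ u * (t ^ 2 + u ^ 2) := by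
      intro t u hu; nlinarith [mul_nonneg hu (sq_nonneg (t - u))]
    have h2 : 2 * s * |x| ≤ Real.sqrt s * (x ^ 2 + s) := by
      have := key |x| (Real.sqrt s) (Real.sqrt_nonneg s)
      rw [hss, sq_abs] at this; linarith
    have h3 := mul_le_mul_of_nonneg_left he (Real.sqrt_nonneg s)
    have h4 : Real.sqrt s * (x ^ 2 / (2 * s) - 1/2 + 1) = Real.sqrt s * (x ^ 2 + s) / (2 * s) := by
      field_simp; ring
    have h5 : |x| ≤ Real.sqrt s * (x ^ 2 + s) / (2 * s) := by
      rw [le_div_iff₀ (by positivity)]; linarith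
    linarith [h4 ▸ h3]
  calc |x| * Real.exp (-x ^ 2 / (2 * s))
      ≤ Real.sqrt s * Real.exp (x ^ 2 / (2 * s) - 1/2) * Real.exp (-x ^ 2 / (2 * s)) :=
        mul_le_mul_of_nonneg_right h1 (Real.exp_pos _).le
    _ = Real.sqrt s * Real.exp (-(1/2 : ℝ)) := by
        rw [mul_assoc, ← Real.exp_add]; ring_nf

lemma sqrt_c1_eq (s : ℝ) (hs : 0 < s) :
    Real.sqrt (2 / (Real.pi * Real.exp 1))
      = 2 * (Real.sqrt s * Real.exp (-(1/2 : ℝ))) * (Real.sqrt (2 * Real.pi * s))⁻¹ := by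
  have hπ := Real.pi_pos
  have hpos : (0:ℝ) < 2 * (Real.sqrt s * Real.exp (-(1/2 : ℝ))) * (Real.sqrt (2 * Real.pi * s))⁻¹ := by
    positivity
  have hsq : (2 * (Real.sqrt s * Real.exp (-(1/2 : ℝ))) * (Real.sqrt (2 * Real.pi * s))⁻¹) ^ 2
      = 2 / (Real.pi * Real.exp 1) := by
    have he : Real.exp (-(1/2 : ℝ)) ^ 2 = (Real.exp 1)⁻¹ := by
      rw [sq, ← Real.exp_add, ← Real.exp_neg]; norm_num
    rw [mul_pow, mul_pow, mul_pow, inv_pow, Real.sq_sqrt hs.le,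
      Real.sq_sqrt (by positivity : (0:ℝ) ≤ 2 * Real.pi * s), he]
    have h1 : Real.exp 1 ≠ 0 := (Real.exp_pos 1).ne'
    field_simp
  rw [← hsq, Real.sqrt_sq hpos.le]

lemma sqrt_c2_eq (s : ℝ) (hs : 0 < s) :
    Real.sqrt (2 / Real.pi) = 2 * Real.sqrt s * (Real.sqrt (2 * Real.pi * s))⁻¹ := by
  have hπ := Real.pi_pos
  have hpos : (0:ℝ) < 2 * Real.sqrt s * (Real.sqrt (2 * Real.pi * s))⁻¹ := by positivity
  have hsq : (2 * Real.sqrt s * (Real.sqrt (2 * Real.pi * s))⁻¹) ^ 2 = 2 / Real.pi := by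
    rw [mul_pow, mul_pow, inv_pow, Real.sq_sqrt hs.le,
      Real.sq_sqrt (by positivity : (0:ℝ) ≤ 2 * Real.pi * s)]
    field_simp
  rw [← hsq, Real.sqrt_sq hpos.le]

lemma core (s r A : ℝ) (hs : 0 < s) (hr : 0 < r) :
    gaussDensity s (r - A) - gaussDensity s (r + A)
      ≤ r * ((1 / s) * Real.sqrt (2 / (Real.pi * Real.exp 1))) := by
  have hπ := Real.pi_pos
  have hcont : Continuous fun x : ℝ => x / s * gaussDensity s x := by
    unfold gaussDensity; fun_prop
  have hftc : ∫ x in (A - r)..(A + r), x / s * gaussDensity s x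
      = -gaussDensity s (A + r) - -gaussDensity s (A - r) :=
    intervalIntegral.integral_eq_sub_of_hasDerivAt
      (fun x _ => gauss_hasDerivAt s hs x) (hcont.intervalIntegrable _ _)
  have heven : gaussDensity s (r - A) = gaussDensity s (A - r) := by
    unfold gaussDensity; rw [show (r - A) ^ 2 = (A - r) ^ 2 by ring]
  set C : ℝ := Real.sqrt s * Real.exp (-(1/2 : ℝ)) * (Real.sqrt (2 * Real.pi * s))⁻¹ / s with hC
  have hb : ∀ x ∈ Set.uIoc (A - r) (A + r), ‖x / s * gaussDensity s x‖ ≤ C := by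
    intro x _
    rw [Real.norm_eq_abs, abs_mul, abs_div, abs_of_pos hs]
    have hg : |gaussDensity s x| = (Real.sqrt (2 * Real.pi * s))⁻¹ * Real.exp (-x ^ 2 / (2 * s)) := by
      unfold gaussDensity
      rw [abs_of_nonneg (by positivity)]
    rw [hg, hC, div_mul_eq_mul_div, div_le_div_iff₀ hs hs]
    have h1 := abs_mul_exp_le s hs x
    have h2 : (0:ℝ) ≤ (Real.sqrt (2 * Real.pi * s))⁻¹ := by positivity
    calc |x| * ((Real.sqrt (2 * Real.pi * s))⁻¹ * Real.exp (-x ^ 2 / (2 * s))) * s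
        = (|x| * Real.exp (-x ^ 2 / (2 * s))) * (Real.sqrt (2 * Real.pi * s))⁻¹ * s := by ring
      _ ≤ (Real.sqrt s * Real.exp (-(1/2:ℝ))) * (Real.sqrt (2 * Real.pi * s))⁻¹ * s := by
          apply mul_le_mul_of_nonneg_right (mul_le_mul_of_nonneg_right h1 h2) hs.le
  have hnorm := intervalIntegral.norm_integral_le_of_norm_le_const hb
  rw [hftc] at hnorm
  have habs : |A + r - (A - r)| = 2 * r := by rw [abs_of_pos (by linarith)]; ring
  rw [habs, Real.norm_eq_abs] at hnorm
  have hle : gaussDensity s (A - r) - gaussDensity s (A + r) ≤ C * (2 * r) :=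
    le_trans (le_abs_self _) (by convert hnorm using 2; (all_goals try rfl); ring)
  rw [heven, add_comm r A]
  calc gaussDensity s (A - r) - gaussDensity s (A + r) ≤ C * (2 * r) := hle
    _ = r * ((1 / s) * Real.sqrt (2 / (Real.pi * Real.exp 1))) := by
        rw [sqrt_c1_eq s hs, hC]; field_simp

lemma shift1 (γ s r m : ℝ) (hs : 0 < s) :
    gaussDensity s (r - m) * Real.exp (γ * m - γ ^ 2 * s / 2)
      = Real.exp (γ * r) * gaussDensity s (r - (m - γ * s)) := by
  unfold gaussDensity
  have h : -(r - m) ^ 2 / (2 * s) + (γ * m - γ ^ 2 * s / 2)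
      = γ * r + -(r - (m - γ * s)) ^ 2 / (2 * s) := by
    field_simp; ring
  rw [mul_assoc, ← Real.exp_add, h, Real.exp_add]; ring

lemma shift2 (γ s r m : ℝ) (hs : 0 < s) :
    gaussDensity s (r + m) * Real.exp (γ * m - γ ^ 2 * s / 2)
      = Real.exp (-(γ * r)) * gaussDensity s (r + (m - γ * s)) := by
  unfold gaussDensity
  have h : -(r + m) ^ 2 / (2 * s) + (γ * m - γ ^ 2 * s / 2)
      = -(γ * r) + -(r + (m - γ * s)) ^ 2 / (2 * s) := by
    field_simp; ring
  rw [mul_assoc, ← Real.exp_add, h, Real.exp_add]; ring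


/-- For any `γ ∈ ℝ` and all `s, r, m > 0`,
`q̄_s(r,m) e^{γm − γ²s/2} ≤ (1/s) e^{γ₊ r} (C₁ + C₂ γ₊ √s)` with
`C₁ = √(2/(πe))` and `C₂ = √(2/π)`. -/
theorem qbar_exponential_bound (γ s r m : ℝ) (hs : 0 < s) (hr : 0 < r) (hm : 0 < m) :
    qbar s r m * Real.exp (γ * m - γ ^ 2 * s / 2)
      ≤ (1 / s) * Real.exp (max γ 0 * r) *
        (Real.sqrt (2 / (Real.pi * Real.exp 1)) + Real.sqrt (2 / Real.pi) * max γ 0 * Real.sqrt s) := by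
  have hπ := Real.pi_pos
  set A : ℝ := m - γ * s with hA
  have hE : qbar s r m * Real.exp (γ * m - γ ^ 2 * s / 2)
      = (Real.exp (γ * r) * gaussDensity s (r - A)
        - Real.exp (-(γ * r)) * gaussDensity s (r + A)) / r := by
    unfold qbar
    rw [div_mul_eq_mul_div, sub_mul, shift1 γ s r m hs, shift2 γ s r m hs]
  rw [hE, div_le_iff₀ hr]
  have hg1 : (0:ℝ) ≤ gaussDensity s (r - A) := by unfold gaussDensity; positivity
  have hg2 : (0:ℝ) ≤ gaussDensity s (r + A) := by unfold gaussDensity; positivity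
  have hgle : gaussDensity s (r + A) ≤ (Real.sqrt (2 * Real.pi * s))⁻¹ := by
    unfold gaussDensity
    have : Real.exp (-(r + A) ^ 2 / (2 * s)) ≤ 1 := by
      rw [Real.exp_le_one_iff]
      exact div_nonpos_of_nonpos_of_nonneg (neg_nonpos.2 (sq_nonneg _)) (by positivity)
    calc (Real.sqrt (2 * Real.pi * s))⁻¹ * Real.exp (-(r + A) ^ 2 / (2 * s))
        ≤ (Real.sqrt (2 * Real.pi * s))⁻¹ * 1 := by
          apply mul_le_mul_of_nonneg_left this (by positivity)
      _ = _ := mul_one _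
  have hcore := core s r A hs hr
  rcases le_or_gt γ 0 with hγ | hγ
  · -- γ ≤ 0
    rw [max_eq_right hγ]
    simp only [zero_mul, mul_zero, Real.exp_zero, mul_one, add_zero]
    have h1 : Real.exp (γ * r) ≤ 1 := Real.exp_le_one_iff.2 (mul_nonpos_of_nonpos_of_nonneg hγ hr.le)
    have h2 : 1 ≤ Real.exp (-(γ * r)) := by
      rw [← Real.exp_zero]; apply Real.exp_le_exp.2; nlinarith
    have : Real.exp (γ * r) * gaussDensity s (r - A) - Real.exp (-(γ * r)) * gaussDensity s (r + A)
        ≤ gaussDensity s (r - A) - gaussDensity s (r + A) := by nlinarith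
    calc Real.exp (γ * r) * gaussDensity s (r - A) - Real.exp (-(γ * r)) * gaussDensity s (r + A)
        ≤ gaussDensity s (r - A) - gaussDensity s (r + A) := this
      _ ≤ r * ((1 / s) * Real.sqrt (2 / (Real.pi * Real.exp 1))) := hcore
      _ = 1 / s * Real.sqrt (2 / (Real.pi * Real.exp 1)) * r := by ring
  · -- γ > 0
    rw [max_eq_left hγ.le]
    have hexp_pos := Real.exp_pos (γ * r)
    have hkey : Real.exp (γ * r) - Real.exp (-(γ * r)) ≤ 2 * γ * r * Real.exp (γ * r) := by
      have h1 := Real.add_one_le_exp (-(2 * γ * r))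
      have h2 : Real.exp (γ * r) * Real.exp (-(2 * γ * r)) = Real.exp (-(γ * r)) := by
        rw [← Real.exp_add]; ring_nf
      nlinarith [Real.exp_pos (γ * r)]
    have hsplit : Real.exp (γ * r) * gaussDensity s (r - A)
          - Real.exp (-(γ * r)) * gaussDensity s (r + A)
        = Real.exp (γ * r) * (gaussDensity s (r - A) - gaussDensity s (r + A))
          + (Real.exp (γ * r) - Real.exp (-(γ * r))) * gaussDensity s (r + A) := by ring
    have hb1 : Real.exp (γ * r) * (gaussDensity s (r - A) - gaussDensity s (r + A))
        ≤ Real.exp (γ * r) * (r * ((1 / s) * Real.sqrt (2 / (Real.pi * Real.exp 1)))) :=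
      mul_le_mul_of_nonneg_left hcore hexp_pos.le
    have hd : (0:ℝ) ≤ Real.exp (γ * r) - Real.exp (-(γ * r)) := by
      have : -(γ * r) ≤ γ * r := by nlinarith
      linarith [Real.exp_le_exp.2 this]
    have hb2 : (Real.exp (γ * r) - Real.exp (-(γ * r))) * gaussDensity s (r + A)
        ≤ (2 * γ * r * Real.exp (γ * r)) * (Real.sqrt (2 * Real.pi * s))⁻¹ := by
      apply mul_le_mul hkey hgle hg2
      positivity
    have hc2 : (2 * γ * r * Real.exp (γ * r)) * (Real.sqrt (2 * Real.pi * s))⁻¹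
        = 1 / s * (Real.sqrt (2 / Real.pi) * γ * Real.sqrt s) * r * Real.exp (γ * r) := by
      rw [sqrt_c2_eq s hs]
      have hss : Real.sqrt s * Real.sqrt s = s := Real.mul_self_sqrt hs.le
      field_simp
      linear_combination (-1 : ℝ) * hss
    calc Real.exp (γ * r) * gaussDensity s (r - A) - Real.exp (-(γ * r)) * gaussDensity s (r + A)
        = Real.exp (γ * r) * (gaussDensity s (r - A) - gaussDensity s (r + A))
          + (Real.exp (γ * r) - Real.exp (-(γ * r))) * gaussDensity s (r + A) := hsplit
      _ ≤ Real.exp (γ * r) * (r * ((1 / s) * Real.sqrt (2 / (Real.pi * Real.exp 1))))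
          + (2 * γ * r * Real.exp (γ * r)) * (Real.sqrt (2 * Real.pi * s))⁻¹ := by
          exact add_le_add hb1 hb2
      _ = 1 / s * Real.exp (γ * r) *
          (Real.sqrt (2 / (Real.pi * Real.exp 1)) + Real.sqrt (2 / Real.pi) * γ * Real.sqrt s) * r := by
          rw [hc2]; ring
end

section
/- For any γ ∈ ℝ and all r, m > 0, ∫₀¹ e^{γm − γ²s/2} q̄_s(r,m) ds ≤ 2^{3/2} e^{rγ₊}, where γ₊ = max(γ,0). -/
open MeasureTheory Real intervalIntegral

section Aux
open Set Filter

noncomputable def stdphi (x : ℝ) : ℝ := (Real.sqrt (2 * Real.pi))⁻¹ * Real.exp (-x ^ 2 / 2)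

lemma stdphi_pos (x : ℝ) : 0 < stdphi x := by
  unfold stdphi
  positivity

lemma stdphi_eq (x : ℝ) : stdphi x = (Real.sqrt (2 * Real.pi))⁻¹ * Real.exp (-(1/2) * x ^ 2) := by
  unfold stdphi; ring_nf

lemma continuous_stdphi : Continuous stdphi := by
  unfold stdphi
  continuity

lemma integrable_stdphi : Integrable stdphi := by
  have h : Integrable (fun x : ℝ => Real.exp (-(1/2 : ℝ) * x ^ 2)) := integrable_exp_neg_mul_sq (by norm_num)
  have := h.const_mul (Real.sqrt (2 * Real.pi))⁻¹
  refine this.congr ?_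
  filter_upwards with x
  rw [stdphi_eq]

lemma integral_stdphi : ∫ x, stdphi x = 1 := by
  have h : (∫ x : ℝ, Real.exp (-(1/2 : ℝ) * x ^ 2)) = Real.sqrt (Real.pi / (1/2)) := integral_gaussian (1/2)
  have : (∫ x, stdphi x) = (Real.sqrt (2 * Real.pi))⁻¹ * ∫ x : ℝ, Real.exp (-(1/2 : ℝ) * x ^ 2) := by
    rw [← MeasureTheory.integral_const_mul]
    congr 1; ext x; rw [stdphi_eq]
  rw [this, h]
  rw [show Real.pi / (1/2) = 2 * Real.pi by ring]
  rw [inv_mul_cancel₀]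
  positivity

noncomputable def stdPhi (x : ℝ) : ℝ := ∫ t in Set.Iic x, stdphi t

lemma stdPhi_nonneg (x : ℝ) : 0 ≤ stdPhi x := by
  apply setIntegral_nonneg measurableSet_Iic
  intro t _; exact (stdphi_pos t).le

lemma stdPhi_le_one (x : ℝ) : stdPhi x ≤ 1 := by
  rw [← integral_stdphi]
  exact setIntegral_le_integral integrable_stdphi (by filter_upwards with t using (stdphi_pos t).le)

lemma stdPhi_mono : Monotone stdPhi := by
  intro a b hab
  apply setIntegral_mono_set integrable_stdphi.integrableOn
  · filter_upwards with t using (stdphi_pos t).le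
  · exact Filter.Eventually.of_forall (Set.Iic_subset_Iic.mpr hab)

lemma stdPhi_add_neg (x : ℝ) : stdPhi x + stdPhi (-x) = 1 := by
  have heven : ∀ t : ℝ, stdphi (-t) = stdphi t := by
    intro t; unfold stdphi; rw [neg_pow]; ring_nf
  have h1 : stdPhi (-x) = ∫ t in Set.Ioi x, stdphi t := by
    unfold stdPhi
    calc (∫ t in Set.Iic (-x), stdphi t) = ∫ t in Set.Iic (-x), stdphi (-t) := by
          congr 1; ext t; rw [heven]
      _ = ∫ t in Set.Ioi (-(-x)), stdphi t := integral_comp_neg_Iic _ _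
      _ = ∫ t in Set.Ioi x, stdphi t := by rw [neg_neg]
  have h2 : (∫ t in Set.Iic x, stdphi t) + ∫ t in Set.Ioi x, stdphi t = 1 := by
    rw [← integral_stdphi, ← MeasureTheory.integral_add_compl (measurableSet_Iic) integrable_stdphi]
    congr 1
    rw [Set.compl_Iic]
  rw [h1]; exact h2

lemma hasDerivAt_stdPhi (x : ℝ) : HasDerivAt stdPhi (stdphi x) x := by
  have key : ∀ y : ℝ, stdPhi y = stdPhi 0 + ∫ t in (0:ℝ)..y, stdphi t := by
    intro y
    have := integral_Iic_sub_Iic (integrable_stdphi.integrableOn (s := Set.Iic 0)) (integrable_stdphi.integrableOn (s := Set.Iic y))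
    unfold stdPhi
    linarith [this]
  have hD : HasDerivAt (fun y => stdPhi 0 + ∫ t in (0:ℝ)..y, stdphi t) (stdphi x) x := by
    apply HasDerivAt.const_add
    exact intervalIntegral.integral_hasDerivAt_right (integrable_stdphi.intervalIntegrable)
      (integrable_stdphi.aestronglyMeasurable.stronglyMeasurableAtFilter)
      continuous_stdphi.continuousAt
  exact hD.congr_of_eventuallyEq (Filter.Eventually.of_forall key)


lemma stdphi_even (t : ℝ) : stdphi (-t) = stdphi t := by
  unfold stdphi; rw [neg_pow]; ring_nf

lemma stdPhi_neg_eq (x : ℝ) : stdPhi (-x) = ∫ t in Set.Ioi x, stdphi t := by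
  unfold stdPhi
  calc (∫ t in Set.Iic (-x), stdphi t) = ∫ t in Set.Iic (-x), stdphi (-t) := by
        congr 1; ext t; rw [stdphi_even]
    _ = ∫ t in Set.Ioi (-(-x)), stdphi t := integral_comp_neg_Iic _ _
    _ = ∫ t in Set.Ioi x, stdphi t := by rw [neg_neg]

lemma hasDerivAt_stdphi (x : ℝ) : HasDerivAt stdphi (-x * stdphi x) x := by
  have h1 : HasDerivAt (fun y : ℝ => -y ^ 2 / 2) (-x) x := by
    have := ((hasDerivAt_pow 2 x).neg).div_const 2
    simpa using this.congr_deriv (by push_cast; ring)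
  have h2 := (h1.exp).const_mul (Real.sqrt (2 * Real.pi))⁻¹
  unfold stdphi
  refine h2.congr_deriv ?_
  ring

lemma stdphi_tendsto_zero : Tendsto stdphi atTop (nhds 0) := by
  have h : Tendsto (fun x : ℝ => -x ^ 2 / 2) atTop atBot := by
    apply Tendsto.atBot_div_const (by norm_num)
    exact tendsto_neg_atBot_iff.mpr (tendsto_pow_atTop (by norm_num))
  have hcomp : Tendsto (fun x : ℝ => Real.exp (-x ^ 2 / 2)) atTop (nhds 0) :=
    Real.tendsto_exp_atBot.comp h
  have h3 := hcomp.const_mul ((Real.sqrt (2 * Real.pi))⁻¹)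
  rw [mul_zero] at h3
  unfold stdphi
  exact h3

lemma integral_id_mul_stdphi_Ioi (t : ℝ) (ht : 0 ≤ t) :
    ∫ x in Set.Ioi t, x * stdphi x = stdphi t := by
  have hderiv : ∀ x ∈ Set.Ioi t, HasDerivAt (fun y => -stdphi y) (x * stdphi x) x := by
    intro x _
    exact (hasDerivAt_stdphi x).neg.congr_deriv (by ring)
  have hcont : ContinuousWithinAt (fun y => -stdphi y) (Set.Ici t) t :=
    (continuous_stdphi.neg).continuousWithinAt
  have hnonneg : ∀ x ∈ Set.Ioi t, 0 ≤ x * stdphi x := by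
    intro x hx
    exact mul_nonneg (le_trans ht (le_of_lt hx)) (stdphi_pos x).le
  have htend : Tendsto (fun y => -stdphi y) atTop (nhds 0) := by
    simpa using stdphi_tendsto_zero.neg
  have := integral_Ioi_of_hasDerivAt_of_nonneg hcont hderiv hnonneg htend
  simpa using this

lemma integrableOn_id_mul_stdphi (t : ℝ) (ht : 0 ≤ t) :
    IntegrableOn (fun x => x * stdphi x) (Set.Ioi t) := by
  have hderiv : ∀ x ∈ Set.Ioi t, HasDerivAt (fun y => -stdphi y) (x * stdphi x) x := by
    intro x _
    exact (hasDerivAt_stdphi x).neg.congr_deriv (by ring)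
  have hcont : ContinuousWithinAt (fun y => -stdphi y) (Set.Ici t) t :=
    (continuous_stdphi.neg).continuousWithinAt
  have hnonneg : ∀ x ∈ Set.Ioi t, 0 ≤ x * stdphi x := by
    intro x hx
    exact mul_nonneg (le_trans ht (le_of_lt hx)) (stdphi_pos x).le
  have htend : Tendsto (fun y => -stdphi y) atTop (nhds 0) := by
    simpa using stdphi_tendsto_zero.neg
  exact integrableOn_Ioi_deriv_of_nonneg hcont hderiv hnonneg htend

lemma mill (t : ℝ) (ht : 0 ≤ t) : t * stdPhi (-t) ≤ stdphi t := by
  rw [stdPhi_neg_eq, ← integral_id_mul_stdphi_Ioi t ht, ← MeasureTheory.integral_const_mul]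
  apply setIntegral_mono_on
  · exact (integrable_stdphi.const_mul t).integrableOn
  · exact integrableOn_id_mul_stdphi t ht
  · exact measurableSet_Ioi
  · intro x hx
    exact mul_le_mul_of_nonneg_right (le_of_lt hx) (stdphi_pos x).le

noncomputable def millh (t : ℝ) : ℝ := Real.exp (t ^ 2 / 2) * stdPhi (-t)

lemma hasDerivAt_millh (t : ℝ) :
    HasDerivAt millh (Real.exp (t ^ 2 / 2) * (t * stdPhi (-t) - stdphi t)) t := by
  have h1 : HasDerivAt (fun y : ℝ => Real.exp (y ^ 2 / 2)) (t * Real.exp (t ^ 2 / 2)) t := by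
    have hp : HasDerivAt (fun y : ℝ => y ^ 2 / 2) t t := by
      simpa using (hasDerivAt_pow 2 t).div_const 2
    simpa [mul_comm] using hp.exp
  have h2 : HasDerivAt (fun y : ℝ => stdPhi (-y)) (-stdphi t) t := by
    have := (hasDerivAt_stdPhi (-t)).comp t (hasDerivAt_neg t)
    simpa [stdphi_even, Function.comp_def] using this
  have := h1.mul h2
  unfold millh
  refine this.congr_deriv ?_
  ring

lemma millh_antitoneOn : AntitoneOn millh (Set.Ici 0) := by
  apply antitoneOn_of_deriv_nonpos (convex_Ici 0)
  · exact fun x _ => ((hasDerivAt_millh x).continuousAt).continuousWithinAt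
  · intro x _
    exact (hasDerivAt_millh x).differentiableAt.differentiableWithinAt
  · intro x hx
    rw [interior_Ici] at hx
    rw [(hasDerivAt_millh x).deriv]
    have := mill x (le_of_lt hx)
    have h := Real.exp_pos (x ^ 2 / 2)
    nlinarith

lemma G_one_le (v c : ℝ) (hv : 0 ≤ v) (hc : 0 ≤ c) :
    stdPhi (c - v) + Real.exp (2 * c * v) * stdPhi (-(v + c)) ≤ 1 := by
  set α := v + c with hα
  set β := v - c with hβ
  have habs : |β| ≤ α := by
    rw [abs_le, hα, hβ]; constructor <;> nlinarith
  have habs0 : (0:ℝ) ≤ |β| := abs_nonneg _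
  have hkey : Real.exp (2 * c * v) * stdPhi (-α) ≤ stdPhi β := by
    have h1 : millh α ≤ millh |β| := millh_antitoneOn (Set.mem_Ici.mpr habs0)
      (Set.mem_Ici.mpr (le_trans habs0 habs)) habs
    have h2 : stdPhi (-|β|) ≤ stdPhi β := stdPhi_mono (neg_abs_le β)
    have hexpand : Real.exp (2 * c * v) * stdPhi (-α)
        = Real.exp (-β ^ 2 / 2) * millh α := by
      unfold millh
      rw [← mul_assoc, ← Real.exp_add]
      congr 2
      simp only [hα, hβ]; ring
    rw [hexpand]
    calc Real.exp (-β ^ 2 / 2) * millh α ≤ Real.exp (-β ^ 2 / 2) * millh |β| := by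
          apply mul_le_mul_of_nonneg_left h1 (Real.exp_pos _).le
      _ = Real.exp (-β ^ 2 / 2) * (Real.exp (β ^ 2 / 2) * stdPhi (-|β|)) := by
          unfold millh; rw [sq_abs]
      _ = stdPhi (-|β|) := by
          rw [← mul_assoc, ← Real.exp_add,
            show (-β ^ 2 / 2 + β ^ 2 / 2 : ℝ) = 0 by ring, Real.exp_zero, one_mul]
      _ ≤ stdPhi β := h2
  have hsum : stdPhi β + stdPhi (-β) = 1 := stdPhi_add_neg β
  have : stdPhi (c - v) = stdPhi (-β) := by rw [hβ]; ring_nf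
  linarith [hkey, this ▸ le_refl (stdPhi (c - v))]


noncomputable def hitG (v c u : ℝ) : ℝ :=
  stdPhi (c * Real.sqrt u - v / Real.sqrt u)
    + Real.exp (2 * c * v) * stdPhi (-(v / Real.sqrt u) - c * Real.sqrt u)

lemma hasDerivAt_hitG (v c s : ℝ) (hs : 0 < s) :
    HasDerivAt (hitG v c)
      ((Real.sqrt (2 * Real.pi * s))⁻¹ * (v / s) * Real.exp (-(v - c * s) ^ 2 / (2 * s))) s := by
  have hq : 0 < Real.sqrt s := Real.sqrt_pos.mpr hs
  set q := Real.sqrt s with hqdef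
  have hq2 : q ^ 2 = s := Real.sq_sqrt hs.le
  have hsq : HasDerivAt Real.sqrt (1 / (2 * q)) s := Real.hasDerivAt_sqrt (ne_of_gt hs)
  have hinv : HasDerivAt (fun u => (Real.sqrt u)⁻¹) (-(1 / (2 * q)) / q ^ 2) s :=
    hsq.inv (ne_of_gt hq)
  have h1 : HasDerivAt (fun u => c * Real.sqrt u - v / Real.sqrt u)
      (c * (1 / (2 * q)) - v * (-(1 / (2 * q)) / q ^ 2)) s := by
    have := (hsq.const_mul c).sub (hinv.const_mul v)
    simpa [div_eq_mul_inv, Pi.sub_def, Pi.neg_def] using this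
  have h2 : HasDerivAt (fun u => -(v / Real.sqrt u) - c * Real.sqrt u)
      (-(v * (-(1 / (2 * q)) / q ^ 2)) - c * (1 / (2 * q))) s := by
    have := ((hinv.const_mul v).neg).sub (hsq.const_mul c)
    simpa [div_eq_mul_inv, Pi.sub_def, Pi.neg_def] using this
  have hPhi1 := (hasDerivAt_stdPhi (c * q - v / q)).comp s h1
  have hPhi2 := ((hasDerivAt_stdPhi (-(v / q) - c * q)).comp s h2).const_mul
    (Real.exp (2 * c * v))
  have hsum := hPhi1.add hPhi2
  have heq : (Real.sqrt (2 * Real.pi * s))⁻¹ * (v / s) * Real.exp (-(v - c * s) ^ 2 / (2 * s))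
      = stdphi (c * q - v / q) * (c * (1 / (2 * q)) - v * (-(1 / (2 * q)) / q ^ 2))
        + Real.exp (2 * c * v) * (stdphi (-(v / q) - c * q)
            * (-(v * (-(1 / (2 * q)) / q ^ 2)) - c * (1 / (2 * q)))) := by
    have hsplit : Real.sqrt (2 * Real.pi * s) = Real.sqrt (2 * Real.pi) * q := by
      rw [hqdef, ← Real.sqrt_mul (by positivity)]
    have hE1 : -(c * q - v / q) ^ 2 / 2 = -(v - c * s) ^ 2 / (2 * s) := by
      rw [← hq2]; field_simp; ring
    have hE2 : 2 * c * v + -(-(v / q) - c * q) ^ 2 / 2 = -(v - c * s) ^ 2 / (2 * s) := by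
      rw [← hq2]; field_simp; ring
    unfold stdphi
    rw [hE1]
    rw [show Real.exp (2 * c * v) * ((Real.sqrt (2 * Real.pi))⁻¹
          * Real.exp (-(-(v / q) - c * q) ^ 2 / 2)
          * (-(v * (-(1 / (2 * q)) / q ^ 2)) - c * (1 / (2 * q))))
        = (Real.sqrt (2 * Real.pi))⁻¹
          * Real.exp (2 * c * v + -(-(v / q) - c * q) ^ 2 / 2)
          * (-(v * (-(1 / (2 * q)) / q ^ 2)) - c * (1 / (2 * q))) by
      rw [Real.exp_add]; ring]
    rw [hE2, hsplit, ← hq2]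
    have h2pi : Real.sqrt (2 * Real.pi) ≠ 0 := by positivity
    field_simp
    ring
  rw [heq]
  exact hsum.congr_deriv rfl

lemma lemA (v c ε : ℝ) (hv : 0 < v) (hc : 0 ≤ c) (hε : 0 < ε) (hε1 : ε ≤ 1) :
    (∫ s in ε..(1:ℝ),
        (Real.sqrt (2 * Real.pi * s))⁻¹ * (v / s) * Real.exp (-(v - c * s) ^ 2 / (2 * s))) ≤ 1 := by
  have hderiv : ∀ s ∈ Set.uIcc ε (1:ℝ), HasDerivAt (hitG v c)
      ((Real.sqrt (2 * Real.pi * s))⁻¹ * (v / s) * Real.exp (-(v - c * s) ^ 2 / (2 * s))) s := by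
    intro s hsmem
    rw [Set.uIcc_of_le hε1] at hsmem
    exact hasDerivAt_hitG v c s (lt_of_lt_of_le hε hsmem.1)
  have hcontOn : ContinuousOn
      (fun s => (Real.sqrt (2 * Real.pi * s))⁻¹ * (v / s) * Real.exp (-(v - c * s) ^ 2 / (2 * s)))
      (Set.uIcc ε 1) := by
    rw [Set.uIcc_of_le hε1]
    have hpos : ∀ s ∈ Set.Icc ε (1:ℝ), (0:ℝ) < s := fun s hs => lt_of_lt_of_le hε hs.1
    apply ContinuousOn.mul
    apply ContinuousOn.mul
    · apply ContinuousOn.inv₀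
      · exact (Real.continuous_sqrt.comp (continuous_const.mul continuous_id)).continuousOn
      · intro s hs
        have := hpos s hs
        positivity
    · apply ContinuousOn.div continuousOn_const continuousOn_id
      intro s hs; exact ne_of_gt (hpos s hs)
    · apply ContinuousOn.rexp
      apply ContinuousOn.div
      · fun_prop
      · fun_prop
      · intro s hs; have := hpos s hs; positivity
  have hii := hcontOn.intervalIntegrable (μ := volume)
  rw [intervalIntegral.integral_eq_sub_of_hasDerivAt hderiv hii]
  have hGε : 0 ≤ hitG v c ε := by
    unfold hitG
    have := stdPhi_nonneg (c * Real.sqrt ε - v / Real.sqrt ε)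
    have := stdPhi_nonneg (-(v / Real.sqrt ε) - c * Real.sqrt ε)
    positivity
  have hG1 : hitG v c 1 ≤ 1 := by
    unfold hitG
    rw [Real.sqrt_one]
    have := G_one_le v c hv.le hc
    rw [show (-(v + c) : ℝ) = -(v/1) - c * 1 by ring] at this
    simpa using this
  linarith


/-- The two-variable kernel. -/
noncomputable def Jk (γ m s v : ℝ) : ℝ :=
  (Real.sqrt (2 * Real.pi * s))⁻¹ * (v / s) * Real.exp (γ * m - γ ^ 2 * s / 2 - v ^ 2 / (2 * s))

/-- Step A : slice identity. -/
lemma sliceA (γ r m : ℝ) (hr : 0 < r) {s : ℝ} (hs : 0 < s) :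
    Real.exp (γ * m - γ ^ 2 * s / 2) * qbar s r m
      = (1 / r) * ∫ v in (m - r)..(m + r), Jk γ m s v := by
  have hFTC : (∫ v in (m - r)..(m + r), (v / s) * Real.exp (-v ^ 2 / (2 * s)))
      = Real.exp (-(m - r) ^ 2 / (2 * s)) - Real.exp (-(m + r) ^ 2 / (2 * s)) := by
    have hderiv : ∀ v ∈ Set.uIcc (m - r) (m + r),
        HasDerivAt (fun v => -Real.exp (-v ^ 2 / (2 * s)))
          ((v / s) * Real.exp (-v ^ 2 / (2 * s))) v := by
      intro v _
      have h1 : HasDerivAt (fun v : ℝ => -v ^ 2 / (2 * s)) (-v / s) v := by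
        have := ((hasDerivAt_pow 2 v).neg).div_const (2 * s)
        apply this.congr_deriv
        push_cast
        field_simp
      have := (h1.exp).neg
      apply this.congr_deriv
      field_simp
    have hint : IntervalIntegrable (fun v => (v / s) * Real.exp (-v ^ 2 / (2 * s)))
        volume (m - r) (m + r) := by
      apply Continuous.intervalIntegrable
      fun_prop
    rw [intervalIntegral.integral_eq_sub_of_hasDerivAt hderiv hint]
    ring
  have hJ : ∀ v : ℝ, Jk γ m s v
      = ((Real.sqrt (2 * Real.pi * s))⁻¹ * Real.exp (γ * m - γ ^ 2 * s / 2))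
        * ((v / s) * Real.exp (-v ^ 2 / (2 * s))) := by
    intro v
    unfold Jk
    rw [show γ * m - γ ^ 2 * s / 2 - v ^ 2 / (2 * s)
        = (γ * m - γ ^ 2 * s / 2) + (-v ^ 2 / (2 * s)) by ring, Real.exp_add]
    ring
  rw [show (∫ v in (m - r)..(m + r), Jk γ m s v)
      = ((Real.sqrt (2 * Real.pi * s))⁻¹ * Real.exp (γ * m - γ ^ 2 * s / 2))
        * ∫ v in (m - r)..(m + r), (v / s) * Real.exp (-v ^ 2 / (2 * s)) by
    rw [← intervalIntegral.integral_const_mul]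
    congr 1; ext v; rw [hJ]]
  rw [hFTC]
  unfold qbar gaussDensity
  rw [show (r - m) ^ 2 = (m - r) ^ 2 by ring, show (r + m) ^ 2 = (m + r) ^ 2 by ring]
  ring

/-- Step B : inner integral bound. -/
lemma innerB (γ r m : ℝ) (hr : 0 < r) (hm : 0 < m) {ε : ℝ} (hε : 0 < ε) (hε1 : ε ≤ 1)
    {v : ℝ} (hv : v ∈ Set.Ioc (m - r) (m + r)) :
    (∫ s in Set.Ioc ε 1, Jk γ m s v) ≤ Real.exp (r * max γ 0) := by
  set c := max γ 0 with hc
  have hc0 : 0 ≤ c := le_max_right _ _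
  rcases le_or_gt v 0 with hv0 | hv0
  · -- v ≤ 0 : integrand nonpositive
    have : (∫ s in Set.Ioc ε 1, Jk γ m s v) ≤ 0 := by
      apply setIntegral_nonpos measurableSet_Ioc
      intro s hs
      unfold Jk
      have hs0 : 0 < s := lt_trans hε hs.1
      have h1 : (0:ℝ) ≤ (Real.sqrt (2 * Real.pi * s))⁻¹ := by positivity
      have h2 : v / s ≤ 0 := div_nonpos_of_nonpos_of_nonneg hv0 hs0.le
      have h3 : (0:ℝ) < Real.exp (γ * m - γ ^ 2 * s / 2 - v ^ 2 / (2 * s)) := Real.exp_pos _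
      have h4 := mul_nonpos_of_nonneg_of_nonpos h1 h2
      exact mul_nonpos_of_nonpos_of_nonneg h4 h3.le
    exact le_trans this (Real.exp_pos _).le
  · -- v > 0
    have hkey : ∀ s ∈ Set.Ioc ε (1:ℝ), Jk γ m s v
        ≤ Real.exp (r * c)
          * ((Real.sqrt (2 * Real.pi * s))⁻¹ * (v / s) * Real.exp (-(v - c * s) ^ 2 / (2 * s))) := by
      intro s hs
      have hs0 : 0 < s := lt_trans hε hs.1
      have hexp : Real.exp (γ * m - γ ^ 2 * s / 2 - v ^ 2 / (2 * s))
          ≤ Real.exp (r * c + -(v - c * s) ^ 2 / (2 * s)) := by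
        rw [Real.exp_le_exp]
        rcases le_or_gt γ 0 with hγ | hγ
        · have hcz : c = 0 := max_eq_right hγ
          rw [hcz]
          have h1 : γ * m ≤ 0 := mul_nonpos_of_nonpos_of_nonneg hγ hm.le
          have h2 : 0 ≤ γ ^ 2 * s / 2 := by positivity
          have hrw : r * 0 + -(v - 0 * s) ^ 2 / (2 * s) = -v ^ 2 / (2 * s) := by ring
          rw [hrw]
          have h3 : -v ^ 2 / (2 * s) = -(v ^ 2 / (2 * s)) := by ring
          linarith
        · have hcγ : c = γ := max_eq_left hγ.le
          rw [hcγ]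
          have h1 : m - r ≤ v := hv.1.le
          have expand : r * γ + -(v - γ * s) ^ 2 / (2 * s)
              = r * γ + γ * v - γ ^ 2 * s / 2 - v ^ 2 / (2 * s) := by
            field_simp
            ring
          rw [expand]
          have h2 : 0 ≤ γ * (v - (m - r)) := mul_nonneg hγ.le (sub_nonneg.mpr h1)
          nlinarith
      unfold Jk
      rw [Real.exp_add] at hexp
      have hpos : (0:ℝ) < (Real.sqrt (2 * Real.pi * s))⁻¹ * (v / s) := by positivity
      calc (Real.sqrt (2 * Real.pi * s))⁻¹ * (v / s)
            * Real.exp (γ * m - γ ^ 2 * s / 2 - v ^ 2 / (2 * s))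
          ≤ (Real.sqrt (2 * Real.pi * s))⁻¹ * (v / s)
            * (Real.exp (r * c) * Real.exp (-(v - c * s) ^ 2 / (2 * s))) :=
            mul_le_mul_of_nonneg_left hexp hpos.le
        _ = Real.exp (r * c) * ((Real.sqrt (2 * Real.pi * s))⁻¹ * (v / s)
            * Real.exp (-(v - c * s) ^ 2 / (2 * s))) := by ring
    -- integrability of both sides on Ioc ε 1
    have hcont1 : ContinuousOn (fun s => Jk γ m s v) (Set.Icc ε 1) := by
      unfold Jk
      have hne : ∀ s ∈ Set.Icc ε (1:ℝ), 0 < s := fun s hs => lt_of_lt_of_le hε hs.1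
      apply ContinuousOn.mul
      apply ContinuousOn.mul
      · apply ContinuousOn.inv₀
        · fun_prop
        · intro s hs; have := hne s hs; positivity
      · apply ContinuousOn.div continuousOn_const continuousOn_id
        intro s hs; exact ne_of_gt (hne s hs)
      · apply ContinuousOn.rexp
        apply ContinuousOn.sub
        · fun_prop
        · apply ContinuousOn.div continuousOn_const (by fun_prop)
          intro s hs; have := hne s hs; positivity
    have hcont2 : ContinuousOn
        (fun s => (Real.sqrt (2 * Real.pi * s))⁻¹ * (v / s)
          * Real.exp (-(v - c * s) ^ 2 / (2 * s))) (Set.Icc ε 1) := by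
      have hne : ∀ s ∈ Set.Icc ε (1:ℝ), 0 < s := fun s hs => lt_of_lt_of_le hε hs.1
      apply ContinuousOn.mul
      apply ContinuousOn.mul
      · apply ContinuousOn.inv₀
        · fun_prop
        · intro s hs; have := hne s hs; positivity
      · apply ContinuousOn.div continuousOn_const continuousOn_id
        intro s hs; exact ne_of_gt (hne s hs)
      · apply ContinuousOn.rexp
        apply ContinuousOn.div (by fun_prop) (by fun_prop)
        intro s hs; have := hne s hs; positivity
    have hint1 : IntegrableOn (fun s => Jk γ m s v) (Set.Ioc ε 1) :=
      (hcont1.integrableOn_compact isCompact_Icc).mono_set Set.Ioc_subset_Icc_self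
    have hint2 : IntegrableOn (fun s => (Real.sqrt (2 * Real.pi * s))⁻¹ * (v / s)
          * Real.exp (-(v - c * s) ^ 2 / (2 * s))) (Set.Ioc ε 1) :=
      (hcont2.integrableOn_compact isCompact_Icc).mono_set Set.Ioc_subset_Icc_self
    calc (∫ s in Set.Ioc ε 1, Jk γ m s v)
        ≤ ∫ s in Set.Ioc ε 1, Real.exp (r * c)
            * ((Real.sqrt (2 * Real.pi * s))⁻¹ * (v / s)
              * Real.exp (-(v - c * s) ^ 2 / (2 * s))) := by
          apply setIntegral_mono_on hint1 (hint2.const_mul _) measurableSet_Ioc hkey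
      _ = Real.exp (r * c) * ∫ s in Set.Ioc ε 1, (Real.sqrt (2 * Real.pi * s))⁻¹ * (v / s)
              * Real.exp (-(v - c * s) ^ 2 / (2 * s)) := MeasureTheory.integral_const_mul _ _
      _ ≤ Real.exp (r * c) * 1 := by
          apply mul_le_mul_of_nonneg_left _ (Real.exp_pos _).le
          rw [← intervalIntegral.integral_of_le hε1]
          exact lemA v c ε hv0 hc0 hε hε1
      _ = Real.exp (r * c) := mul_one _

lemma stepC (γ r m : ℝ) (hr : 0 < r) (hm : 0 < m) {ε : ℝ} (hε : 0 < ε) (hε1 : ε ≤ 1) :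
    (∫ s in Set.Ioc ε 1, Real.exp (γ * m - γ ^ 2 * s / 2) * qbar s r m)
      ≤ 2 * Real.exp (r * max γ 0) := by
  have huv : m - r ≤ m + r := by linarith
  -- rewrite via slices
  have h1 : (∫ s in Set.Ioc ε 1, Real.exp (γ * m - γ ^ 2 * s / 2) * qbar s r m)
      = (1 / r) * ∫ s in Set.Ioc ε 1, ∫ v in Set.Ioc (m - r) (m + r), Jk γ m s v := by
    rw [← MeasureTheory.integral_const_mul]
    apply setIntegral_congr_fun measurableSet_Ioc
    intro s hs
    dsimp only
    rw [sliceA γ r m hr (lt_trans hε hs.1), intervalIntegral.integral_of_le huv]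
  rw [h1]
  -- integrability on the product
  have hcontP : ContinuousOn (fun p : ℝ × ℝ => Jk γ m p.1 p.2)
      ((Set.Icc ε 1) ×ˢ (Set.Icc (m - r) (m + r))) := by
    have hne : ∀ p : ℝ × ℝ, p ∈ (Set.Icc ε 1) ×ˢ (Set.Icc (m - r) (m + r)) → 0 < p.1 :=
      fun p hp => lt_of_lt_of_le hε hp.1.1
    unfold Jk
    apply ContinuousOn.mul
    apply ContinuousOn.mul
    · apply ContinuousOn.inv₀
      · fun_prop
      · intro p hp; have := hne p hp; positivity
    · apply ContinuousOn.div (by fun_prop) (by fun_prop)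
      intro p hp; exact ne_of_gt (hne p hp)
    · apply ContinuousOn.rexp
      apply ContinuousOn.sub (by fun_prop)
      apply ContinuousOn.div (by fun_prop) (by fun_prop)
      intro p hp; have := hne p hp; positivity
  have hFint : IntegrableOn (fun p : ℝ × ℝ => Jk γ m p.1 p.2)
      ((Set.Ioc ε 1) ×ˢ (Set.Ioc (m - r) (m + r))) (volume.prod volume) := by
    apply IntegrableOn.mono_set
      (hcontP.integrableOn_compact (isCompact_Icc.prod isCompact_Icc))
    exact Set.prod_mono Set.Ioc_subset_Icc_self Set.Ioc_subset_Icc_self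
  have hFint' : Integrable (Function.uncurry (fun s v => Jk γ m s v))
      ((volume.restrict (Set.Ioc ε 1)).prod (volume.restrict (Set.Ioc (m - r) (m + r)))) := by
    rw [MeasureTheory.Measure.prod_restrict]
    exact hFint
  have hswap : (∫ s in Set.Ioc ε 1, ∫ v in Set.Ioc (m - r) (m + r), Jk γ m s v)
      = ∫ v in Set.Ioc (m - r) (m + r), ∫ s in Set.Ioc ε 1, Jk γ m s v :=
    MeasureTheory.integral_integral_swap hFint'
  rw [hswap]
  -- bound the outer integral
  have hmarg : IntegrableOn (fun v => ∫ s in Set.Ioc ε 1, Jk γ m s v)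
      (Set.Ioc (m - r) (m + r)) := hFint'.integral_prod_right
  have hconst : IntegrableOn (fun _ : ℝ => Real.exp (r * max γ 0))
      (Set.Ioc (m - r) (m + r)) := by
    exact integrableOn_const measure_Ioc_lt_top.ne
  have hb : (∫ v in Set.Ioc (m - r) (m + r), ∫ s in Set.Ioc ε 1, Jk γ m s v)
      ≤ ∫ _ in Set.Ioc (m - r) (m + r), Real.exp (r * max γ 0) := by
    apply setIntegral_mono_on hmarg hconst measurableSet_Ioc
    intro v hv
    exact innerB γ r m hr hm hε hε1 hv
  have hc : (∫ _ in Set.Ioc (m - r) (m + r), Real.exp (r * max γ 0))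
      = 2 * r * Real.exp (r * max γ 0) := by
    rw [setIntegral_const, Real.volume_real_Ioc_of_le (by linarith), smul_eq_mul]
    ring
  calc (1 / r) * ∫ v in Set.Ioc (m - r) (m + r), ∫ s in Set.Ioc ε 1, Jk γ m s v
      ≤ (1 / r) * (2 * r * Real.exp (r * max γ 0)) := by
        apply mul_le_mul_of_nonneg_left _ (by positivity)
        rw [← hc]; exact hb
    _ = 2 * Real.exp (r * max γ 0) := by field_simp

/-- For any `γ ∈ ℝ` and all `r, m > 0`,
`∫₀¹ e^{γm − γ²s/2} q̄_s(r,m) ds ≤ 2^{3/2} e^{rγ₊}`. -/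
theorem integral_time_qbar_exponential_bound (γ r m : ℝ) (hr : 0 < r) (hm : 0 < m) :
    (∫ s in (0 : ℝ)..(1 : ℝ), Real.exp (γ * m - γ ^ 2 * s / 2) * qbar s r m)
      ≤ (2 : ℝ) ^ ((3 : ℝ) / 2) * Real.exp (r * max γ 0) := by
  set I : ℝ → ℝ := fun s => Real.exp (γ * m - γ ^ 2 * s / 2) * qbar s r m with hI
  -- integrability of I on Ioc 0 1
  set C : ℝ := Real.exp (γ * m) * (Real.sqrt (2 * Real.pi))⁻¹ * 2 / r with hC
  have hC0 : 0 ≤ C := by positivity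
  have hgint : IntegrableOn (fun s : ℝ => C * s ^ (-(1/2) : ℝ)) (Set.Ioc 0 1) := by
    have := (intervalIntegrable_rpow' (show (-1:ℝ) < -(1/2) by norm_num)
      (a := 0) (b := 1)).const_mul C
    exact (intervalIntegrable_iff_integrableOn_Ioc_of_le zero_le_one).mp this
  have hIcont : ContinuousOn I (Set.Ioc 0 1) := by
    have hne : ∀ s ∈ Set.Ioc (0:ℝ) 1, (0:ℝ) < s := fun s hs => hs.1
    unfold I
    unfold qbar gaussDensity
    apply ContinuousOn.mul (by fun_prop)
    apply ContinuousOn.div _ continuousOn_const (fun s _ => ne_of_gt hr)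
    apply ContinuousOn.sub
    all_goals {
      apply ContinuousOn.mul
      · apply ContinuousOn.inv₀ (by fun_prop)
        intro s hs; have := hne s hs; positivity
      · apply ContinuousOn.rexp
        apply ContinuousOn.div (by fun_prop) (by fun_prop)
        intro s hs; have := hne s hs; positivity
    }
  have hIbound : ∀ s ∈ Set.Ioc (0:ℝ) 1, ‖I s‖ ≤ ‖C * s ^ (-(1/2) : ℝ)‖ := by
    intro s hs
    have hs0 : 0 < s := hs.1
    have hsqrt : Real.sqrt (2 * Real.pi * s) = Real.sqrt (2 * Real.pi) * Real.sqrt s := by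
      rw [← Real.sqrt_mul (by positivity)]
    have hgd : ∀ x : ℝ, gaussDensity s x ∈ Set.Icc 0 ((Real.sqrt (2 * Real.pi * s))⁻¹) := by
      intro x
      constructor
      · unfold gaussDensity; positivity
      · unfold gaussDensity
        have h1 : Real.exp (-x ^ 2 / (2 * s)) ≤ 1 := by
          apply Real.exp_le_one_iff.mpr
          have h0 : 0 ≤ x ^ 2 / (2 * s) := by positivity
          have h0' : -x ^ 2 / (2 * s) = -(x ^ 2 / (2 * s)) := by ring
          linarith
        have h2 : (0:ℝ) ≤ (Real.sqrt (2 * Real.pi * s))⁻¹ := by positivity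
        nlinarith
    have hq : |qbar s r m| ≤ 2 * (Real.sqrt (2 * Real.pi * s))⁻¹ / r := by
      unfold qbar
      rw [abs_div, abs_of_pos hr, div_le_div_iff_of_pos_right hr]
      have h1 := hgd (r - m)
      have h2 := hgd (r + m)
      rw [abs_sub_le_iff]
      constructor <;> [skip; skip] <;>
        · have := h1.1; have := h1.2; have := h2.1; have := h2.2; linarith
    have hexp : Real.exp (γ * m - γ ^ 2 * s / 2) ≤ Real.exp (γ * m) := by
      apply Real.exp_le_exp.mpr
      nlinarith [sq_nonneg γ, hs0.le]
    have hrpow : s ^ (-(1/2) : ℝ) = (Real.sqrt s)⁻¹ := by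
      rw [Real.rpow_neg hs0.le, Real.sqrt_eq_rpow]
    have hnormI : ‖I s‖ = Real.exp (γ * m - γ ^ 2 * s / 2) * |qbar s r m| := by
      rw [hI]
      simp only [norm_mul, Real.norm_eq_abs]
      rw [abs_of_pos (Real.exp_pos _)]
    have hnormg : ‖C * s ^ (-(1/2) : ℝ)‖ = C * (Real.sqrt s)⁻¹ := by
      rw [Real.norm_eq_abs, abs_of_nonneg (by positivity), hrpow]
    rw [hnormI, hnormg]
    calc Real.exp (γ * m - γ ^ 2 * s / 2) * |qbar s r m|
        ≤ Real.exp (γ * m) * (2 * (Real.sqrt (2 * Real.pi * s))⁻¹ / r) := by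
          apply mul_le_mul hexp hq (abs_nonneg _) (Real.exp_pos _).le
      _ = C * (Real.sqrt s)⁻¹ := by
          rw [hsqrt, hC, mul_inv]
          have hs' : Real.sqrt s ≠ 0 := by positivity
          have h2π : Real.sqrt (2 * Real.pi) ≠ 0 := by positivity
          field_simp
  have hIint : IntegrableOn I (Set.Ioc 0 1) := by
    apply Integrable.mono hgint (hIcont.aestronglyMeasurable measurableSet_Ioc)
    rw [MeasureTheory.ae_restrict_iff' measurableSet_Ioc]
    filter_upwards with s hs using hIbound s hs
  -- monotone family of sets
  set A : ℕ → Set ℝ := fun n => Set.Ioc (1 / (n + 1) : ℝ) 1 with hA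
  have hAmeas : ∀ n, MeasurableSet (A n) := fun n => measurableSet_Ioc
  have hAmono : Monotone A := by
    intro n k hnk
    apply Set.Ioc_subset_Ioc_left
    apply one_div_le_one_div_of_le (by positivity)
    exact_mod_cast by omega
  have hAunion : (⋃ n, A n) = Set.Ioc (0:ℝ) 1 := by
    ext x
    simp only [hA, Set.mem_iUnion, Set.mem_Ioc]
    constructor
    · rintro ⟨n, h1, h2⟩
      exact ⟨lt_trans (by positivity) h1, h2⟩
    · rintro ⟨hx0, hx1⟩
      obtain ⟨n, hn⟩ := exists_nat_one_div_lt hx0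
      exact ⟨n, hn, hx1⟩
  have htend := MeasureTheory.tendsto_setIntegral_of_monotone hAmeas hAmono
    (hAunion ▸ hIint)
  rw [hAunion] at htend
  have hbound : ∀ n : ℕ, (∫ s in A n, I s) ≤ 2 * Real.exp (r * max γ 0) := by
    intro n
    apply stepC γ r m hr hm (by positivity)
    rw [div_le_one (by positivity)]
    linarith [Nat.cast_nonneg (α := ℝ) n]
  have hfinal : (∫ s in Set.Ioc (0:ℝ) 1, I s) ≤ 2 * Real.exp (r * max γ 0) :=
    le_of_tendsto htend (Filter.Eventually.of_forall hbound)
  rw [intervalIntegral.integral_of_le zero_le_one]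
  calc (∫ s in Set.Ioc (0:ℝ) 1, I s) ≤ 2 * Real.exp (r * max γ 0) := hfinal
    _ ≤ (2:ℝ) ^ ((3:ℝ)/2) * Real.exp (r * max γ 0) := by
        apply mul_le_mul_of_nonneg_right _ (Real.exp_pos _).le
        calc (2:ℝ) = 2 ^ (1:ℝ) := (Real.rpow_one 2).symm
          _ ≤ 2 ^ ((3:ℝ)/2) := by
              rw [Real.rpow_le_rpow_left_iff (by norm_num)]
              norm_num

end Aux
end

section
/- Let (R(t))_{t≥0} be a three-dimensional Bessel process starting from 0, and let 0 < t₁ < t₂, and y, m, b > 0. Then P(min_{u∈[t₁,t₂]} R(u) ≤ b | R(t₁)=y, R(t₂)=m) ≤ b(m+y)/(ym). -/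
open Real

/-- Let `p` be the conditional probability that the minimum of a three-dimensional Bessel
process over `[t₁, t₂]` is at most `b`, given `R(t₁) = y` and `R(t₂) = m`.  This
probability satisfies `0 ≤ p ≤ 1`, and for `b < y ∧ m` it is given by the explicit bridge
formula `(e^{2(b−y)(m−b)/T} − e^{−2ym/T})/(1 − e^{−2ym/T})` with `T = t₂ − t₁`.  Then
`p ≤ b(m+y)/(ym)`. -/
theorem bessel_bridge_min_prob_bound
    (t₁ t₂ y m b p : ℝ) (ht₁ : 0 < t₁) (ht : t₁ < t₂)
    (hy : 0 < y) (hm : 0 < m) (hb : 0 < b)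
    (hp0 : 0 ≤ p) (hp1 : p ≤ 1)
    (hform : b < min y m →
      p = (Real.exp (2 * (b - y) * (m - b) / (t₂ - t₁)) -
            Real.exp (-(2 * y * m) / (t₂ - t₁))) /
          (1 - Real.exp (-(2 * y * m) / (t₂ - t₁)))) :
    p ≤ b * (m + y) / (y * m) := by
  have hym : 0 < y * m := mul_pos hy hm
  by_cases hbmin : b < min y m
  · rw [hform hbmin]
    have hby : b < y := lt_of_lt_of_le hbmin (min_le_left _ _)
    have hbm' : b < m := lt_of_lt_of_le hbmin (min_le_right _ _)
    have hT : 0 < t₂ - t₁ := by linarith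
    set A : ℝ := 2 * (b - y) * (m - b) / (t₂ - t₁) with hA
    set B : ℝ := 2 * y * m / (t₂ - t₁) with hB
    have hBpos : 0 < B := by positivity
    have hAneg : A < 0 := by
      apply div_neg_of_neg_of_pos _ hT
      nlinarith
    have hABsum : A + B = 2 * b * (m + y - b) / (t₂ - t₁) := by
      rw [hA, hB, ← add_div]; ring_nf
    have hABpos : 0 < A + B := by
      rw [hABsum]; apply div_pos _ hT; nlinarith
    have hAB : -B < A := by linarith
    have key := (convexOn_exp).secant_mono_aux2 (x := -B) (y := A) (z := 0)
      trivial trivial hAB hAneg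
    simp only [Real.exp_zero, zero_sub, sub_neg_eq_add] at key
    rw [zero_add] at key
    have hED : Real.exp (-B) < 1 := by
      rw [Real.exp_lt_one_iff]; linarith
    have hDen : 0 < 1 - Real.exp (-B) := by linarith
    have hneg : -(2 * y * m) / (t₂ - t₁) = -B := by rw [hB, neg_div]
    rw [hneg]
    have step1 : (Real.exp A - Real.exp (-B)) / (1 - Real.exp (-B)) ≤ (A + B) / B := by
      rw [div_le_div_iff₀ hDen hBpos]
      rw [div_le_div_iff₀ hABpos hBpos] at key
      nlinarith
    refine step1.trans ?_
    have hq : (A + B) / B = b * (m + y - b) / (y * m) := by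
      rw [hABsum, hB]
      field_simp
    rw [hq, div_le_div_iff₀ hym hym]
    nlinarith [mul_pos hb (mul_pos hb hym)]
  · push_neg at hbmin
    rw [min_le_iff] at hbmin
    have h : y * m ≤ b * (m + y) := by
      rcases hbmin with h | h
      · nlinarith
      · nlinarith
    calc p ≤ 1 := hp1
      _ ≤ b * (m + y) / (y * m) := by
          rw [le_div_iff₀ hym]; linarith
end
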